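/- Let d ≥ 2, θ = (θ_1,…,θ_d), ξ = (ξ_1,…,ξ_d) ∈ ℝᵈ, and let C_{θ,ξ} be the conjugation on ℓ²(ℕᵈ, ℂ) defined coefficientwise by (C_{θ,ξ} a)_k = exp(i Σ_{j=1}^d ξ_j) · exp(−i Σ_{j=1}^d k_j θ_j) · conj(a_k) for k ∈ ℕᵈ. Let T be a Toeplitz operator on ℓ²(ℕᵈ, ℂ) with symbol coefficients φ(k), k ∈ ℤᵈ. Then T is C_{θ,ξ}-symmetric (C_{θ,ξ} T* C_{θ,ξ} = T) if and only if exp(i Σ_{j=1}^d k_j θ_j) · φ(k) = φ(−k) for all k ∈ ℤᵈ. -/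

import Mathlib

noncomputable section
open scoped ComplexConjugate
open ContinuousLinearMap

/-- A conjugation on a complex Hilbert space: an antilinear, involutive, isometric map. -/
def IsConjugation {E : Type*} [NormedAddCommGroup E] [InnerProductSpace ℂ E] (C : E → E) : Prop :=
  (∀ (a : ℂ) (f g : E), C (a • f + g) = conj a • C f + C g) ∧
  (∀ f, C (C f) = f) ∧
  (∀ f, ‖C f‖ = ‖f‖)

/-- The inner product in the paper's convention: linear in the first argument and
conjugate-linear in the second (Mathlib's `inner` with the arguments swapped). -/
def ip {E : Type*} [NormedAddCommGroup E] [InnerProductSpace ℂ E] (x y : E) : ℂ :=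
  inner ℂ y x

/-- `ℓ²(ℕᵈ, ℂ)`, identified with the Hardy space `H²(𝔻ᵈ)`. -/
abbrev Ell2d (d : ℕ) : Type := lp (fun _ : (Fin d → ℕ) => ℂ) 2

/-- The standard orthonormal basis of `ℓ²(ℕᵈ, ℂ)`. -/
def ed {d : ℕ} (k : Fin d → ℕ) : Ell2d d := lp.single 2 k 1

/-!
`C_{θ,ξ}` is a diagonal conjugation `a ↦ (c_k · conj a_k)_k` with `|c_k| = 1`, so `C T* C` is a
bounded linear operator and it equals `T` as soon as the two agree on the basis vectors. The
`(k, l)` entry of `C T* C` is `c_k · conj c_l · φ(l - k) = exp(i Σ_j (l_j - k_j) θ_j) · φ(l - k)`,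
that of `T` is `φ(k - l)`, and every `m ∈ ℤᵈ` is a difference `l - k` with `k, l ∈ ℕᵈ`.
-/

namespace lp

variable {ι : Type*} {c : ι → ℂ} {C : lp (fun _ : ι => ℂ) 2 → lp (fun _ : ι => ℂ) 2}

def diagonalConjCLM (hC : ∀ a k, C a k = c k * conj (a k)) (hc : ∀ k, ‖c k‖ = 1) :
    lp (fun _ : ι => ℂ) 2 →L⋆[ℂ] lp (fun _ : ι => ℂ) 2 :=
  LinearMap.mkContinuous
    { toFun := C
      map_add' := fun f g => lp.ext <| funext fun k => by
        simp only [hC, lp.coeFn_add, Pi.add_apply, map_add, mul_add]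
      map_smul' := fun a f => lp.ext <| funext fun k => by
        simp only [hC, lp.coeFn_smul, Pi.smul_apply, smul_eq_mul, map_mul]; ring }
    1 fun f => by
      have hp : (0 : ℝ) < (2 : ENNReal).toReal := by norm_num
      simp only [LinearMap.coe_mk, AddHom.coe_mk, one_mul, lp.norm_eq_tsum_rpow hp, hC,
        norm_mul, hc, Complex.norm_conj, le_refl]

@[simp]
lemma coe_diagonalConjCLM (hC : ∀ a k, C a k = c k * conj (a k)) (hc : ∀ k, ‖c k‖ = 1) :
    ⇑(diagonalConjCLM hC hc) = C :=
  rfl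

variable [DecidableEq ι]

lemma apply_eq_inner_single_one (f : lp (fun _ : ι => ℂ) 2) (k : ι) :
    f k = inner ℂ (lp.single 2 k 1) f := by
  simp [lp.inner_single_left]

lemma adjoint_apply_single_one (T : lp (fun _ : ι => ℂ) 2 →L[ℂ] lp (fun _ : ι => ℂ) 2)
    (k l : ι) : adjoint T (lp.single 2 l 1) k = conj (T (lp.single 2 k 1) l) := by
  rw [apply_eq_inner_single_one, adjoint_inner_right, ← inner_conj_symm,
    ← apply_eq_inner_single_one]

theorem diagonalConj_symmetric_iff (hC : ∀ a k, C a k = c k * conj (a k))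
    (hc : ∀ k, ‖c k‖ = 1) (T : lp (fun _ : ι => ℂ) 2 →L[ℂ] lp (fun _ : ι => ℂ) 2) :
    (∀ x, C (adjoint T (C x)) = T x) ↔
      ∀ k l, c k * conj (c l) * T (lp.single 2 k 1) l = T (lp.single 2 l 1) k := by
  have hC_single (l : ι) : C (lp.single 2 l 1) = c l • lp.single 2 l 1 :=
    lp.ext <| funext fun k => by
      by_cases h : k = l <;> simp [hC, lp.single_apply, h]
  have hentry (k l : ι) :
      C (adjoint T (C (lp.single 2 l 1))) k = c k * conj (c l) * T (lp.single 2 k 1) l := by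
    rw [hC_single, map_smul, hC, lp.coeFn_smul, Pi.smul_apply, smul_eq_mul,
      adjoint_apply_single_one]
    simp only [map_mul, Complex.conj_conj]
    ring
  constructor
  · intro h k l
    rw [← hentry, h]
  · intro h
    let Cb := diagonalConjCLM hC hc
    suffices Cb.comp ((adjoint T).comp Cb) = T from fun x => congr($this x)
    refine lp.ext_continuousLinearMap (by norm_num) fun l => ContinuousLinearMap.ext_ring ?_
    exact lp.ext <| funext fun k => by simpa [Cb, hentry] using h k l

end lp

theorem Pi.forall_natCast_sub_iff {ι : Type*} {P : (ι → ℤ) → Prop} :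
    (∀ k l : ι → ℕ, P (fun j => (l j : ℤ) - k j)) ↔ ∀ m, P m := by
  refine ⟨fun h m => ?_, fun h k l => h _⟩
  convert h (fun j => (-m j).toNat) (fun j => (m j).toNat) using 1
  funext j; omega

section ThetaXi

variable {ι : Type*} [Fintype ι] (θ ξ : ι → ℝ)

def thetaXiMultiplier (k : ι → ℕ) : ℂ :=
  Complex.exp (Complex.I * ∑ j, (ξ j : ℂ)) *
    Complex.exp (-Complex.I * ∑ j, (k j : ℂ) * (θ j : ℂ))

lemma norm_thetaXiMultiplier (k : ι → ℕ) : ‖thetaXiMultiplier θ ξ k‖ = 1 := by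
  simp [thetaXiMultiplier, Complex.norm_exp]

lemma thetaXiMultiplier_mul_conj (k l : ι → ℕ) :
    thetaXiMultiplier θ ξ k * conj (thetaXiMultiplier θ ξ l) =
      Complex.exp (Complex.I * ∑ j, (((l j : ℤ) - k j : ℤ) : ℂ) * (θ j : ℂ)) := by
  rw [thetaXiMultiplier, thetaXiMultiplier, ← Complex.exp_add, ← Complex.exp_add,
    ← Complex.exp_conj, ← Complex.exp_add]
  congr 1
  simp only [map_add, map_mul, map_neg, map_sum, Complex.conj_I, Complex.conj_ofReal,
    map_natCast]
  push_cast
  simp only [sub_mul, Finset.sum_sub_distrib]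
  ring

end ThetaXi

theorem c_theta_xi_symmetric_iff_polydisc_general
    (d : ℕ) (θ ξ : Fin d → ℝ)
    (C : Ell2d d → Ell2d d)
    (hCdef : ∀ (a : Ell2d d) (k : Fin d → ℕ),
      C a k = Complex.exp (Complex.I * ∑ j, (ξ j : ℂ)) *
        Complex.exp (-Complex.I * ∑ j, ((k j : ℕ) : ℂ) * (θ j : ℂ)) * conj (a k))
    (T : Ell2d d →L[ℂ] Ell2d d)
    (φ : (Fin d → ℤ) → ℂ)
    (hφ : ∀ k l : Fin d → ℕ, φ (fun j => (k j : ℤ) - (l j : ℤ)) = ip (T (ed l)) (ed k)) :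
    (∀ x, C (adjoint T (C x)) = T x) ↔
      ∀ k : Fin d → ℤ,
        Complex.exp (Complex.I * ∑ j, ((k j : ℤ) : ℂ) * (θ j : ℂ)) * φ k = φ (-k) := by
  have hentry (k l : Fin d → ℕ) : T (lp.single 2 l 1) k = φ (fun j => (k j : ℤ) - l j) := by
    rw [hφ, ip, ed, ed, lp.apply_eq_inner_single_one]
  rw [lp.diagonalConj_symmetric_iff (c := thetaXiMultiplier θ ξ) hCdef
    (norm_thetaXiMultiplier θ ξ) T, ← Pi.forall_natCast_sub_iff]
  refine forall_congr' fun k => forall_congr' fun l => ?_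
  have hneg : -(fun j => (l j : ℤ) - k j) = fun j => (k j : ℤ) - l j := by
    funext j; simp
  rw [thetaXiMultiplier_mul_conj, hentry, hentry, hneg]

/-- Let `d ≥ 2`, `θ, ξ ∈ ℝᵈ`, and let `C_{θ,ξ}` be the conjugation on
`ℓ²(ℕᵈ, ℂ)` given coefficientwise by
`(C a)_k = exp(i Σ_j ξ_j) exp(−i Σ_j k_j θ_j) conj(a_k)`.  A Toeplitz operator `T` with symbol
coefficients `φ(k)` is `C_{θ,ξ}`-symmetric if and only if
`exp(i Σ_j k_j θ_j) φ(k) = φ(−k)` for all `k ∈ ℤᵈ`. -/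
theorem c_theta_xi_symmetric_iff_polydisc
    (d : ℕ) (hd : 2 ≤ d) (θ ξ : Fin d → ℝ)
    (C : Ell2d d → Ell2d d) (hC : IsConjugation C)
    (hCdef : ∀ (a : Ell2d d) (k : Fin d → ℕ),
      C a k = Complex.exp (Complex.I * ∑ j, (ξ j : ℂ)) *
        Complex.exp (-Complex.I * ∑ j, ((k j : ℕ) : ℂ) * (θ j : ℂ)) * conj (a k))
    (S : Fin d → (Ell2d d →L[ℂ] Ell2d d))
    (hS : ∀ (i : Fin d) (k : Fin d → ℕ), S i (ed k) = ed (k + Pi.single i 1))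
    (T : Ell2d d →L[ℂ] Ell2d d)
    (hT : ∀ i, (adjoint (S i)).comp (T.comp (S i)) = T)
    (φ : (Fin d → ℤ) → ℂ)
    (hφ : ∀ k l : Fin d → ℕ, φ (fun j => (k j : ℤ) - (l j : ℤ)) = ip (T (ed l)) (ed k)) :
    (∀ x, C (adjoint T (C x)) = T x) ↔
      ∀ k : Fin d → ℤ,
        Complex.exp (Complex.I * ∑ j, ((k j : ℤ) : ℂ) * (θ j : ℂ)) * φ k = φ (-k) :=
  c_theta_xi_symmetric_iff_polydisc_general d θ ξ C hCdef T φ hφ
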